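/- Let n ≥ 2, κ > 1, P ∈ ℝⁿ with P ≠ 0, and |P| < b < κ|P|. Then: (a) min over x ∈ Γ(P,b) of h(x,P,b) equals (κ|P| − b)/(κ − 1), attained at x = P/|P|; (b) max over x ∈ Γ(P,b) of h(x,P,b) equals √(κ²|P|² − b²)/√(κ² − 1), and this maximum is ≤ √(2|P|)·√((κ|P| − b)/(κ − 1)). -/

import Mathlib

open scoped RealInnerProductSpace

/-- The discriminant `Δ(t) = (κ²t − b)² − (κ² − 1)(κ²|P|² − b²)` for the Cartesian oval in
the case `κ > 1`. -/
noncomputable def ovalDelta' (κ b normP t : ℝ) : ℝ :=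
  (κ ^ 2 * t - b) ^ 2 - (κ ^ 2 - 1) * (κ ^ 2 * normP ^ 2 - b ^ 2)

/-- The polar radius `h(x,P,b) = ρ₋(x)` of the refracting piece of the Cartesian oval
(case `κ > 1`). -/
noncomputable def ovalH' {n : ℕ} (κ b : ℝ) (P x : EuclideanSpace ℝ (Fin n)) : ℝ :=
  ((κ ^ 2 * ⟪x, P⟫ - b) - Real.sqrt (ovalDelta' κ b ‖P‖ ⟪x, P⟫)) / (κ ^ 2 - 1)

/-- `I(P,b) = (b + √((κ² − 1)(κ²|P|² − b²)))/(κ²|P|)`. -/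
noncomputable def ovalI (κ b normP : ℝ) : ℝ :=
  (b + Real.sqrt ((κ ^ 2 - 1) * (κ ^ 2 * normP ^ 2 - b ^ 2))) / (κ ^ 2 * normP)

/-- `Γ(P,b) = {x ∈ S^{n−1} : x·P ≥ I(P,b)|P|}`, the set of directions of the refracting
piece of the oval. -/
def ovalGamma {n : ℕ} (κ b : ℝ) (P : EuclideanSpace ℝ (Fin n)) :
    Set (EuclideanSpace ℝ (Fin n)) :=
  {x | ‖x‖ = 1 ∧ ovalI κ b ‖P‖ * ‖P‖ ≤ ⟪x, P⟫}

/-!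
Write `t = ⟪x, P⟫` and `C = (κ² − 1)(κ²|P|² − b²)`. Then `h(x,P,b) = φ(κ²t − b)/(κ² − 1)` with
`φ u = u − √(u² − C)`, which is antitone on `[√C, ∞)`. On `Γ(P,b)` the argument `κ²t − b` ranges
over `[√C, κ²|P| − b]`, so `h` is least at the upper end and greatest at the lower one. The upper
end comes from Cauchy–Schwarz and is attained at `P/|P|`, where `φ = (κ + 1)(κ|P| − b)`. The lower
end is attained because in dimension `≥ 2` the unit sphere is connected, so `⟪·, P⟫` takes every
value of `[−|P|, |P|]` on it; there `φ = √C`.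
-/

theorem antitoneOn_sub_sqrt_sq_sub {C : ℝ} (hC : 0 ≤ C) :
    AntitoneOn (fun u => u - √(u ^ 2 - C)) (Set.Ici √C) := by
  intro u hu v hv huv
  simp only [Set.mem_Ici] at hu hv
  have hsq : C ≤ u ^ 2 := by
    simpa [Real.sq_sqrt hC] using pow_le_pow_left₀ (Real.sqrt_nonneg C) hu 2
  have hu0 : 0 ≤ u := (Real.sqrt_nonneg C).trans hu
  have hu' : √(u ^ 2 - C) ≤ u := Real.sqrt_le_iff.2 ⟨hu0, by linarith⟩
  have hv' : √(v ^ 2 - C) ≤ v := Real.sqrt_le_iff.2 ⟨hu0.trans huv, by linarith⟩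
  have hu2 := Real.sq_sqrt (sub_nonneg.2 hsq)
  have hv2 := Real.sq_sqrt (sub_nonneg.2 (hsq.trans (pow_le_pow_left₀ hu0 huv 2)))
  -- `(√(v²−C) − √(u²−C)) (√(v²−C) + √(u²−C)) = v² − u²` and the second factor is `≤ u + v`
  show v - √(v ^ 2 - C) ≤ u - √(u ^ 2 - C)
  nlinarith [Real.sqrt_nonneg (u ^ 2 - C), Real.sqrt_nonneg (v ^ 2 - C)]

theorem sub_sqrt_sq_sub_le {C u : ℝ} (hC : 0 ≤ C) (hu : √C ≤ u) : u - √(u ^ 2 - C) ≤ √C := by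
  simpa [Real.sq_sqrt hC] using antitoneOn_sub_sqrt_sq_sub hC Set.self_mem_Ici hu hu

theorem sqrt_mul_div_self {a c : ℝ} (ha : 0 ≤ a) : √(a * c) / a = √c / √a := by
  rw [Real.sqrt_mul ha, mul_div_right_comm, Real.sqrt_div_self']
  ring

theorem real_inner_norm_inv_smul_self {E : Type*} [NormedAddCommGroup E] [InnerProductSpace ℝ E]
    (P : E) : ⟪‖P‖⁻¹ • P, P⟫ = ‖P‖ := by
  rw [real_inner_smul_left, real_inner_self_eq_norm_sq, inv_mul_eq_div, sq, mul_self_div_self]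

theorem exists_norm_eq_one_inner_eq {E : Type*} [NormedAddCommGroup E] [InnerProductSpace ℝ E]
    (hE : 1 < Module.rank ℝ E) {P : E} (hP : P ≠ 0) {t : ℝ} (ht : |t| ≤ ‖P‖) :
    ∃ x, ‖x‖ = 1 ∧ ⟪x, P⟫ = t := by
  have hunit : ‖‖P‖⁻¹ • P‖ = 1 := norm_smul_inv_norm hP
  obtain ⟨x, hx, hxt⟩ := (isPreconnected_sphere hE 0 1).intermediate_value
    (a := -(‖P‖⁻¹ • P)) (b := ‖P‖⁻¹ • P) (by simpa using hunit) (by simpa using hunit)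
    (f := fun x => ⟪x, P⟫) (by fun_prop)
    (by simp only [inner_neg_left, real_inner_norm_inv_smul_self]; exact abs_le.1 ht)
  exact ⟨x, by simpa using hx, hxt⟩

theorem sqrt_div_sqrt_le_sqrt_mul_sqrt {κ b N : ℝ} (hκ : 1 < κ) (hN : 0 ≤ N) (hb : b ≤ κ * N) :
    √(κ ^ 2 * N ^ 2 - b ^ 2) / √(κ ^ 2 - 1) ≤ √(2 * N) * √((κ * N - b) / (κ - 1)) := by
  rw [← Real.sqrt_div' _ (by nlinarith), ← Real.sqrt_mul (by positivity)]
  refine Real.sqrt_le_sqrt ?_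
  rw [mul_div_assoc', div_le_div_iff₀ (by nlinarith) (by linarith)]
  nlinarith [mul_nonneg (mul_nonneg (sub_nonneg.2 hb) (sub_pos.2 hκ).le)
    (show 0 ≤ κ * N - b + 2 * N by linarith)]

section CartesianOval

variable {κ b N : ℝ}

theorem ovalDelta'_self (κ b N : ℝ) : ovalDelta' κ b N N = (κ * (b - N)) ^ 2 := by
  unfold ovalDelta'; ring

theorem sqrt_le_sq_mul_sub (hb : b ≤ κ ^ 2 * N) :
    √((κ ^ 2 - 1) * (κ ^ 2 * N ^ 2 - b ^ 2)) ≤ κ ^ 2 * N - b := by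
  refine Real.sqrt_le_iff.2 ⟨by linarith, ?_⟩
  nlinarith [ovalDelta'_self κ b N, ovalDelta']

theorem ovalI_mul_self (hκ : κ ≠ 0) (hN : N ≠ 0) :
    ovalI κ b N * N = (b + √((κ ^ 2 - 1) * (κ ^ 2 * N ^ 2 - b ^ 2))) / κ ^ 2 := by
  unfold ovalI; field_simp

theorem le_sq_mul_of_le_mul (hκ : 1 ≤ κ) (hN : 0 ≤ N) (hb : b ≤ κ * N) : b ≤ κ ^ 2 * N :=
  hb.trans (by nlinarith [mul_nonneg (mul_nonneg (zero_le_one.trans hκ) (sub_nonneg.2 hκ)) hN])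

theorem sq_sub_one_mul_nonneg (hκ : 1 ≤ κ) (hb : 0 ≤ b) (hbN : b ≤ κ * N) :
    0 ≤ (κ ^ 2 - 1) * (κ ^ 2 * N ^ 2 - b ^ 2) :=
  mul_nonneg (by nlinarith) (by nlinarith)

variable {n : ℕ} {P x : EuclideanSpace ℝ (Fin n)}

theorem mem_ovalGamma_iff (hκ : κ ≠ 0) (hP : P ≠ 0) :
    x ∈ ovalGamma κ b P ↔
      ‖x‖ = 1 ∧ √((κ ^ 2 - 1) * (κ ^ 2 * ‖P‖ ^ 2 - b ^ 2)) ≤ κ ^ 2 * ⟪x, P⟫ - b := by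
  rw [ovalGamma, Set.mem_ofPred_eq, ovalI_mul_self hκ (norm_ne_zero_iff.2 hP),
    div_le_iff₀ (by positivity)]
  exact and_congr_right fun _ => by constructor <;> intro h <;> linarith

theorem norm_inv_smul_mem_ovalGamma (hκ : 1 ≤ κ) (hP : P ≠ 0) (hb : b ≤ κ * ‖P‖) :
    ‖P‖⁻¹ • P ∈ ovalGamma κ b P := by
  refine (mem_ovalGamma_iff (by positivity) hP).2 ⟨norm_smul_inv_norm hP, ?_⟩
  rw [real_inner_norm_inv_smul_self]
  exact sqrt_le_sq_mul_sub (le_sq_mul_of_le_mul hκ (norm_nonneg P) hb)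

theorem ovalH'_norm_inv_smul (hκ : 1 < κ) (hb : ‖P‖ ≤ b) :
    ovalH' κ b P (‖P‖⁻¹ • P) = (κ * ‖P‖ - b) / (κ - 1) := by
  rw [ovalH', real_inner_norm_inv_smul_self, ovalDelta'_self,
    Real.sqrt_sq (by nlinarith), div_eq_div_iff (by nlinarith) (by linarith)]
  ring

theorem ovalH'_norm_inv_smul_le (hκ : 1 < κ) (hP : P ≠ 0) (hb : 0 ≤ b) (hb' : b ≤ κ * ‖P‖)
    (hx : x ∈ ovalGamma κ b P) : ovalH' κ b P (‖P‖⁻¹ • P) ≤ ovalH' κ b P x := by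
  obtain ⟨hx1, hxC⟩ := (mem_ovalGamma_iff (by positivity) hP).1 hx
  have hxP : ⟪x, P⟫ ≤ ‖P‖ := by simpa [hx1] using real_inner_le_norm x P
  have hN := norm_nonneg P
  have key := antitoneOn_sub_sqrt_sq_sub (sq_sub_one_mul_nonneg hκ.le hb hb') hxC
    (sqrt_le_sq_mul_sub (le_sq_mul_of_le_mul hκ.le hN hb'))
    (by nlinarith : κ ^ 2 * ⟪x, P⟫ - b ≤ κ ^ 2 * ‖P‖ - b)
  unfold ovalH' ovalDelta'
  rw [real_inner_norm_inv_smul_self]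
  exact div_le_div_of_nonneg_right key (by nlinarith)

theorem ovalH'_le_of_mem_ovalGamma (hκ : 1 < κ) (hP : P ≠ 0) (hb : 0 ≤ b) (hb' : b ≤ κ * ‖P‖)
    (hx : x ∈ ovalGamma κ b P) :
    ovalH' κ b P x ≤ √((κ ^ 2 - 1) * (κ ^ 2 * ‖P‖ ^ 2 - b ^ 2)) / (κ ^ 2 - 1) := by
  have hxC := ((mem_ovalGamma_iff (by positivity) hP).1 hx).2
  exact div_le_div_of_nonneg_right
    (sub_sqrt_sq_sub_le (sq_sub_one_mul_nonneg hκ.le hb hb') hxC) (by nlinarith)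

theorem exists_mem_ovalGamma_ovalH'_eq (hn : 2 ≤ n) (hκ : 1 < κ) (hP : P ≠ 0) (hb : 0 ≤ b)
    (hb' : b ≤ κ * ‖P‖) :
    ∃ x ∈ ovalGamma κ b P,
      ovalH' κ b P x = √((κ ^ 2 - 1) * (κ ^ 2 * ‖P‖ ^ 2 - b ^ 2)) / (κ ^ 2 - 1) := by
  have hN : 0 < ‖P‖ := norm_pos_iff.2 hP
  have hC := sq_sub_one_mul_nonneg hκ.le hb hb'
  have hs := sqrt_le_sq_mul_sub (le_sq_mul_of_le_mul hκ.le hN.le hb')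
  have hrank : 1 < Module.rank ℝ (EuclideanSpace ℝ (Fin n)) := by
    rw [← Module.finrank_eq_rank, finrank_euclideanSpace_fin]
    exact_mod_cast hn
  set s := √((κ ^ 2 - 1) * (κ ^ 2 * ‖P‖ ^ 2 - b ^ 2))
  obtain ⟨x, hx1, hxt⟩ := exists_norm_eq_one_inner_eq hrank hP (t := (b + s) / κ ^ 2)
    (abs_le.2 ⟨by linarith [show 0 ≤ (b + s) / κ ^ 2 by positivity],
      by rw [div_le_iff₀ (by positivity)]; nlinarith⟩)
  have hu : κ ^ 2 * ⟪x, P⟫ - b = s := by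
    rw [hxt]; field_simp; ring
  refine ⟨x, (mem_ovalGamma_iff (by positivity) hP).2 ⟨hx1, hu.ge⟩, ?_⟩
  rw [ovalH', ovalDelta', hu, Real.sq_sqrt hC, sub_self, Real.sqrt_zero, sub_zero]

end CartesianOval

/-- Lemma 4.3 (a), (b): extrema of `h(·,P,b)` over `Γ(P,b)` for `κ > 1`. -/
theorem stmt12 {n : ℕ} (hn : 2 ≤ n) (κ : ℝ) (hκ : 1 < κ)
    (P : EuclideanSpace ℝ (Fin n)) (hP : P ≠ 0) (b : ℝ)
    (hb1 : ‖P‖ < b) (hb2 : b < κ * ‖P‖) :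
    -- (a) the minimum, attained at x = P/|P|
    IsLeast {r : ℝ | ∃ x ∈ ovalGamma κ b P, ovalH' κ b P x = r}
      ((κ * ‖P‖ - b) / (κ - 1)) ∧
    ovalH' κ b P (‖P‖⁻¹ • P) = (κ * ‖P‖ - b) / (κ - 1) ∧
    -- (b) the maximum, together with the bound √(2|P|)·√((κ|P| − b)/(κ − 1))
    IsGreatest {r : ℝ | ∃ x ∈ ovalGamma κ b P, ovalH' κ b P x = r}
      (Real.sqrt (κ ^ 2 * ‖P‖ ^ 2 - b ^ 2) / Real.sqrt (κ ^ 2 - 1)) ∧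
    Real.sqrt (κ ^ 2 * ‖P‖ ^ 2 - b ^ 2) / Real.sqrt (κ ^ 2 - 1) ≤
      Real.sqrt (2 * ‖P‖) * Real.sqrt ((κ * ‖P‖ - b) / (κ - 1)) := by
  have hN : 0 < ‖P‖ := norm_pos_iff.2 hP
  have hb0 : 0 ≤ b := hN.le.trans hb1.le
  have hmax := sqrt_mul_div_self (c := κ ^ 2 * ‖P‖ ^ 2 - b ^ 2) (by nlinarith : 0 ≤ κ ^ 2 - 1)
  have hmin := ovalH'_norm_inv_smul (P := P) hκ hb1.le
  obtain ⟨x₀, hx₀, hx₀_eq⟩ := exists_mem_ovalGamma_ovalH'_eq hn hκ hP hb0 hb2.le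
  refine ⟨⟨⟨_, norm_inv_smul_mem_ovalGamma hκ.le hP hb2.le, hmin⟩, ?_⟩, hmin,
    ⟨⟨x₀, hx₀, hx₀_eq.trans hmax⟩, ?_⟩, sqrt_div_sqrt_le_sqrt_mul_sqrt hκ hN.le hb2.le⟩
  · rintro _ ⟨x, hx, rfl⟩
    exact hmin ▸ ovalH'_norm_inv_smul_le hκ hP hb0 hb2.le hx
  · rintro _ ⟨x, hx, rfl⟩
    exact hmax ▸ ovalH'_le_of_mem_ovalGamma hκ hP hb0 hb2.le hx
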